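/- arXiv:2105.00078 — 5 statements merged into one kernel-verified Lean document; each statement's English description precedes it below -/
import Mathlib

section
/- Let B : X → ℝ be continuous and bounded above with 𝓛_B(1) = 1, and let μ be a T-invariant Borel probability measure on X with B μ-integrable such that the duality ∫ 𝓛_B(φ) dμ = ∫ φ dμ holds for every continuous φ : X → [−∞, ∞) for which both sides are defined in [−∞, ∞) (in particular 𝓛_B^* μ = μ). Then h_ν(μ) = −∫ B dμ. -/
open MeasureTheory Real Filter Topology

/-- The Ruelle operator `(𝓛_A φ)(x) = ∫_{Ker T} e^{A(z + v_x)} φ(z + v_x) dν(z)`,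
where `ν` is the a priori probability measure (supported on `Ker T`) and `v x` is the
unique element of `E` with `T (v x) = x`. -/
noncomputable def ruelle {X : Type*} [NormedAddCommGroup X] [NormedSpace ℝ X]
    [MeasurableSpace X] (ν : Measure X) (v : X → X) (A φ : X → ℝ) (x : X) : ℝ :=
  ∫ z, Real.exp (A (z + v x)) * φ (z + v x) ∂ν

noncomputable def entropy {X : Type*} [NormedAddCommGroup X] [NormedSpace ℝ X]
    [MeasurableSpace X] (ν : Measure X) (v : X → X) (μ : Measure X) : ℝ :=
  sInf { r : ℝ | ∃ u : X → ℝ, Continuous u ∧ (∃ C : ℝ, ∀ x, |u x| ≤ C) ∧ (∀ x, 0 < u x) ∧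
    r = ∫ x, Real.log (ruelle ν v (fun _ => (0 : ℝ)) u x / u x) ∂μ }

/-!
Normalisation `𝓛_B 1 = 1` makes `z ↦ e^{B(z + v x)}` a probability density on every fibre, so
Jensen's inequality gives `𝓛_B φ ≤ log 𝓛_B (e^φ)`. For `u` bounded away from `0` take
`φ = log u - B`: then `𝓛_B (e^φ) = 𝓛_0 u`, and integrating against `μ` with the duality gives
`∫ log (𝓛_0 u / u) dμ ≥ -∫ B dμ`. A general `u > 0` is reduced to `u + ε` by dominated
convergence, because `|log ((a + ε) / (u + ε))| ≤ |log (a / u)|`. The infimum is attained at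
`u = e^B`, where `𝓛_0 u / u = e^{-B}`. Continuity of `v`, needed for `𝓛_B φ` to be
continuous, comes from the open mapping theorem for `T` restricted to `E 1`.
-/

lemma continuous_of_isCompl_ker {X Y : Type*} [NormedAddCommGroup X] [NormedSpace ℝ X]
    [CompleteSpace X] [NormedAddCommGroup Y] [NormedSpace ℝ Y] [CompleteSpace Y]
    {T : X →L[ℝ] Y} (hT : Function.Surjective T) {E : Submodule ℝ X} (hE : IsClosed (E : Set X))
    (hcompl : IsCompl (LinearMap.ker (T : X →ₗ[ℝ] Y)) E) {v : Y → X}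
    (hv : ∀ y, v y ∈ E ∧ T (v y) = y) : Continuous v := by
  have : CompleteSpace E := hE.completeSpace_coe
  let S : E →L[ℝ] Y := T.comp E.subtypeL
  have hS_inj : Function.Injective S := (injective_iff_map_eq_zero S).mpr fun x hx =>
    Subtype.ext (Submodule.disjoint_def.mp hcompl.disjoint x hx x.2)
  have hS_surj : Function.Surjective S := by
    intro y
    obtain ⟨x, rfl⟩ := hT y
    obtain ⟨k, hk, e, he, rfl⟩ :=
      Submodule.mem_sup.mp (hcompl.sup_eq_top ▸ Submodule.mem_top : x ∈ _)
    exact ⟨⟨e, he⟩, by simp [S, show T k = 0 from hk]⟩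
  let e := ContinuousLinearEquiv.ofBijective S (LinearMap.ker_eq_bot_of_injective hS_inj)
    (LinearMap.range_eq_top.mpr hS_surj)
  have hv_eq : v = fun y => (e.symm y : X) := funext fun y => by
    rw [show e.symm y = ⟨v y, (hv y).1⟩ from e.symm_apply_eq.mpr (hv y).2.symm]
  rw [hv_eq]
  exact continuous_subtype_val.comp e.symm.continuous

lemma abs_mul_exp_le_of_le {t M : ℝ} (h : t ≤ M) : |t * exp t| ≤ 1 + |M| * exp M := by
  have hM : 0 ≤ |M| * exp M := by positivity
  rcases le_or_gt t 0 with ht | ht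
  · rw [abs_of_nonpos (mul_nonpos_of_nonpos_of_nonneg ht (exp_pos t).le)]
    have hneg : -t ≤ exp (-t) := by linarith [add_one_le_exp (-t)]
    calc -(t * exp t) = -t * exp t := by ring
      _ ≤ exp (-t) * exp t := by gcongr
      _ = 1 := by rw [← exp_add, neg_add_cancel, exp_zero]
      _ ≤ 1 + |M| * exp M := by linarith
  · rw [abs_of_pos (mul_pos ht (exp_pos t))]
    calc t * exp t ≤ |M| * exp M :=
          mul_le_mul (h.trans (le_abs_self M)) (exp_le_exp.mpr h) (exp_pos t).le (abs_nonneg M)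
      _ ≤ 1 + |M| * exp M := by linarith

lemma abs_log_add_div_add_le {a u ε : ℝ} (ha : 0 < a) (hu : 0 < u) (hε : 0 ≤ ε) :
    |log ((a + ε) / (u + ε))| ≤ |log (a / u)| := by
  have hlog_mul_le {s t : ℝ} (hs : 0 < s) (hst : s ≤ t) :
      log (t + ε) + log s ≤ log t + log (s + ε) := by
    have ht : 0 < t := hs.trans_le hst
    rw [← log_mul (by positivity) hs.ne', ← log_mul ht.ne' (by positivity)]
    exact log_le_log (by positivity) (by nlinarith)
  rw [log_div (by positivity) (by positivity), log_div ha.ne' hu.ne']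
  rcases le_total a u with h | h
  · have := hlog_mul_le ha h
    rw [abs_of_nonpos (by linarith [log_le_log (by positivity) (by linarith : a + ε ≤ u + ε)]),
      abs_of_nonpos (by linarith [log_le_log ha h])]
    linarith
  · have := hlog_mul_le hu h
    rw [abs_of_nonneg (by linarith [log_le_log (by positivity) (by linarith : u + ε ≤ a + ε)]),
      abs_of_nonneg (by linarith [log_le_log hu h])]
    linarith

lemma integral_mul_le_log_integral_mul_exp {Z : Type*} [MeasurableSpace Z] {ρ : Measure Z}
    {w φ : Z → ℝ} (hw : 0 ≤ w) (hw_int : Integrable w ρ) (hw_one : ∫ z, w z ∂ρ = 1)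
    (hwφ : Integrable (fun z => w z * φ z) ρ) (hwexp : Integrable (fun z => w z * exp (φ z)) ρ) :
    ∫ z, w z * φ z ∂ρ ≤ log (∫ z, w z * exp (φ z) ∂ρ) := by
  set J := ∫ z, w z * φ z ∂ρ
  -- the tangent line of `exp` at `J`, weighted by `w`; its integral is `exp J`
  have tangent : ∀ z, exp J * (w z + w z * φ z - J * w z) ≤ w z * exp (φ z) := fun z =>
    calc exp J * (w z + w z * φ z - J * w z) = w z * exp J * ((φ z - J) + 1) := by ring
      _ ≤ w z * exp J * exp (φ z - J) :=
          mul_le_mul_of_nonneg_left (add_one_le_exp _) (mul_nonneg (hw z) (exp_pos J).le)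
      _ = w z * exp (φ z) := by rw [mul_assoc, ← exp_add, add_sub_cancel]
  have h_exp : exp J ≤ ∫ z, w z * exp (φ z) ∂ρ :=
    calc exp J = ∫ z, exp J * (w z + w z * φ z - J * w z) ∂ρ := by
          rw [integral_const_mul, integral_sub (f := fun z => w z + w z * φ z)
            (hw_int.add hwφ) (hw_int.const_mul J), integral_add hw_int hwφ, integral_const_mul,
            hw_one]
          ring
      _ ≤ _ := integral_mono (((hw_int.add hwφ).sub (hw_int.const_mul J)).const_mul _) hwexp tangent
  exact (le_log_iff_exp_le ((exp_pos J).trans_le h_exp)).mpr h_exp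

lemma Continuous.integrable_of_abs_le {α : Type*} [TopologicalSpace α] [MeasurableSpace α]
    [OpensMeasurableSpace α] {μ : Measure α} [IsFiniteMeasure μ] {f : α → ℝ} (hf : Continuous f)
    {K : ℝ} (hK : ∀ x, |f x| ≤ K) : Integrable f μ :=
  Integrable.of_bound hf.aestronglyMeasurable K (ae_of_all _ hK)

lemma continuous_integral_comp_add {X Y : Type*} [TopologicalSpace X] [Add X] [ContinuousAdd X]
    [MeasurableSpace X] [OpensMeasurableSpace X] [TopologicalSpace Y]
    [FirstCountableTopology Y] {ν : Measure X}
    [IsFiniteMeasure ν] {v : Y → X} (hv : Continuous v) {G : X → ℝ}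
    (hG : Continuous G) {K : ℝ} (hK : ∀ y, |G y| ≤ K) :
    Continuous fun x => ∫ z, G (z + v x) ∂ν :=
  continuous_of_dominated
    (fun x => (hG.comp (continuous_add_const (v x))).aestronglyMeasurable)
    (fun x => ae_of_all _ fun z => hK (z + v x)) (integrable_const K)
    (ae_of_all _ fun _ => hG.comp (continuous_const.add hv))

section Ruelle

variable {X : Type*} [NormedAddCommGroup X] [NormedSpace ℝ X] [MeasurableSpace X]
  {ν : Measure X} {v : X → X}

lemma ruelle_zero_apply (u : X → ℝ) (x : X) :
    ruelle ν v (fun _ => 0) u x = ∫ z, u (z + v x) ∂ν := by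
  simp only [ruelle, exp_zero, one_mul]

lemma abs_ruelle_le [IsProbabilityMeasure ν] {A φ : X → ℝ} {K : ℝ}
    (hK : ∀ y, |exp (A y) * φ y| ≤ K) (x : X) : |ruelle ν v A φ x| ≤ K := by
  simpa [ruelle] using norm_integral_le_of_norm_le_const (μ := ν)
    (f := fun z => exp (A (z + v x)) * φ (z + v x)) (ae_of_all _ fun z => hK (z + v x))

variable [OpensMeasurableSpace X]

lemma continuous_ruelle [IsFiniteMeasure ν] (hv : Continuous v) {A φ : X → ℝ} (hA : Continuous A)
    (hφ : Continuous φ) {K : ℝ} (hK : ∀ y, |exp (A y) * φ y| ≤ K) :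
    Continuous (ruelle ν v A φ) :=
  continuous_integral_comp_add hv ((continuous_exp.comp hA).mul hφ) hK

lemma ruelle_zero_mem_Icc [IsProbabilityMeasure ν] {u : X → ℝ} (hu : Continuous u) {c C : ℝ}
    (hcu : ∀ y, c ≤ u y) (huC : ∀ y, u y ≤ C) (x : X) :
    ruelle ν v (fun _ => 0) u x ∈ Set.Icc c C := by
  have hu_int : Integrable (fun z => u (z + v x)) ν :=
    (hu.comp (continuous_add_const (v x))).integrable_of_abs_le (K := max |c| |C|) fun z =>
      abs_le_max_abs_abs (hcu _) (huC _)
  rw [ruelle_zero_apply]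
  constructor
  · simpa using integral_mono (integrable_const c) hu_int fun z => hcu (z + v x)
  · simpa using integral_mono hu_int (integrable_const C) fun z => huC (z + v x)

lemma ruelle_le_log_ruelle_exp [IsProbabilityMeasure ν] {B : X → ℝ} (hB : Continuous B) {M : ℝ}
    (hBM : ∀ y, B y ≤ M) {x : X} (hBnorm : ruelle ν v B (fun _ => 1) x = 1) {φ : X → ℝ}
    (hφ : Continuous φ) {K K' : ℝ} (hφK : ∀ y, |exp (B y) * φ y| ≤ K)
    (hφK' : ∀ y, |exp (B y) * exp (φ y)| ≤ K') :
    ruelle ν v B φ x ≤ log (ruelle ν v B (fun y => exp (φ y)) x) := by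
  have hfiber {G : X → ℝ} (hG : Continuous G) {L : ℝ} (hL : ∀ y, |G y| ≤ L) :
      Integrable (fun z => G (z + v x)) ν :=
    (hG.comp (continuous_add_const (v x))).integrable_of_abs_le fun z => hL (z + v x)
  have hexpB : ∀ y, |exp (B y)| ≤ exp M := fun y => by
    rw [abs_exp]; exact exp_le_exp.mpr (hBM y)
  exact integral_mul_le_log_integral_mul_exp (fun z => (exp_pos _).le)
    (hfiber (continuous_exp.comp hB) hexpB) (by simpa [ruelle] using hBnorm)
    (hfiber ((continuous_exp.comp hB).mul hφ) hφK)
    (hfiber ((continuous_exp.comp hB).mul (continuous_exp.comp hφ)) hφK')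

lemma ruelle_zero_pos [IsProbabilityMeasure ν] {u : X → ℝ} (hu : Continuous u) {C : ℝ}
    (huC : ∀ y, |u y| ≤ C) (hu_pos : ∀ y, 0 < u y) (x : X) : 0 < ruelle ν v (fun _ => 0) u x := by
  rw [ruelle_zero_apply, integral_pos_iff_support_of_nonneg (fun z => (hu_pos _).le)
    ((hu.comp (continuous_add_const (v x))).integrable_of_abs_le fun z => huC _)]
  simp [Function.support, (hu_pos _).ne']

variable [IsProbabilityMeasure ν] {B : X → ℝ} {μ : Measure X} [IsProbabilityMeasure μ]

lemma neg_integral_le_integral_log_ruelle_zero_div_of_le (hv : Continuous v) (hB : Continuous B)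
    {M : ℝ} (hBM : ∀ y, B y ≤ M) (hBnorm : ∀ x, ruelle ν v B (fun _ => 1) x = 1)
    (hint : Integrable B μ)
    (hdual : ∀ φ : X → ℝ, Continuous φ → Integrable φ μ →
      Integrable (fun x => ruelle ν v B φ x) μ → ∫ x, ruelle ν v B φ x ∂μ = ∫ x, φ x ∂μ)
    {u : X → ℝ} (hu : Continuous u) {c C : ℝ} (hc : 0 < c) (hcu : ∀ y, c ≤ u y)
    (huC : ∀ y, u y ≤ C) :
    -∫ x, B x ∂μ ≤ ∫ x, log (ruelle ν v (fun _ => 0) u x / u x) ∂μ := by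
  have hlog_le {w : ℝ} (hw : w ∈ Set.Icc c C) : |log w| ≤ max |log c| |log C| :=
    abs_le_max_abs_abs (log_le_log hc hw.1) (log_le_log (hc.trans_le hw.1) hw.2)
  have hu_bdd : ∀ y, |u y| ≤ max |c| |C| := fun y => abs_le_max_abs_abs (hcu y) (huC y)
  have hlog_u : Continuous fun y => log (u y) := hu.log fun y => (hc.trans_le (hcu y)).ne'
  have hlog_u_int : Integrable (fun y => log (u y)) μ :=
    hlog_u.integrable_of_abs_le fun y => hlog_le ⟨hcu y, huC y⟩
  set φ : X → ℝ := fun y => log (u y) - B y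
  have hφ : Continuous φ := hlog_u.sub hB
  have hφ_bdd : ∀ y, |exp (B y) * φ y| ≤ exp M * max |log c| |log C| + (1 + |M| * exp M) :=
    fun y => calc
      |exp (B y) * φ y| = |exp (B y) * log (u y) - B y * exp (B y)| := by
        simp only [φ, mul_sub, mul_comm (B y)]
      _ ≤ |exp (B y)| * |log (u y)| + |B y * exp (B y)| := by rw [← abs_mul]; exact abs_sub _ _
      _ ≤ _ := add_le_add
          (mul_le_mul (by rw [abs_exp]; exact exp_le_exp.mpr (hBM y)) (hlog_le ⟨hcu y, huC y⟩)
            (abs_nonneg _) (exp_pos M).le)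
          (abs_mul_exp_le_of_le (hBM y))
  have hexp_φ : ∀ y, exp (B y) * exp (φ y) = u y := fun y => by
    rw [← exp_add, add_sub_cancel, exp_log (hc.trans_le (hcu y))]
  have hjensen : ∀ x, ruelle ν v B φ x ≤ log (ruelle ν v (fun _ => 0) u x) := fun x => by
    have := ruelle_le_log_ruelle_exp hB hBM (hBnorm x) hφ hφ_bdd
      (fun y => (hexp_φ y).symm ▸ hu_bdd y)
    simpa only [ruelle, hexp_φ, exp_zero, one_mul] using this
  have hruelle_φ_int : Integrable (ruelle ν v B φ) μ :=
    (continuous_ruelle hv hB hφ hφ_bdd).integrable_of_abs_le (abs_ruelle_le hφ_bdd)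
  have hlog_ruelle_int : Integrable (fun x => log (ruelle ν v (fun _ => 0) u x)) μ :=
    ((continuous_ruelle hv continuous_const hu
        (by simpa only [exp_zero, one_mul] using hu_bdd)).log fun x =>
        (hc.trans_le (ruelle_zero_mem_Icc hu hcu huC x).1).ne').integrable_of_abs_le
      fun x => hlog_le (ruelle_zero_mem_Icc hu hcu huC x)
  have hu_pos : ∀ y, 0 < u y := fun y => hc.trans_le (hcu y)
  calc -∫ x, B x ∂μ = ∫ x, φ x ∂μ - ∫ x, log (u x) ∂μ := by
        rw [integral_sub hlog_u_int hint]; ring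
    _ = ∫ x, ruelle ν v B φ x ∂μ - ∫ x, log (u x) ∂μ := by
        rw [hdual φ hφ (hlog_u_int.sub hint) hruelle_φ_int]
    _ ≤ ∫ x, log (ruelle ν v (fun _ => 0) u x) ∂μ - ∫ x, log (u x) ∂μ :=
        sub_le_sub_right (integral_mono hruelle_φ_int hlog_ruelle_int hjensen) _
    _ = ∫ x, log (ruelle ν v (fun _ => 0) u x / u x) ∂μ := by
        rw [← integral_sub hlog_ruelle_int hlog_u_int]
        refine integral_congr_ae (ae_of_all _ fun x => (log_div ?_ (hu_pos x).ne').symm)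
        exact (hc.trans_le (ruelle_zero_mem_Icc hu hcu huC x).1).ne'

lemma integral_nonneg_of_ruelle_dual (hv : Continuous v) (hB : Continuous B)
    {M : ℝ} (hBM : ∀ y, B y ≤ M) (hBnorm : ∀ x, ruelle ν v B (fun _ => 1) x = 1)
    (hint : Integrable B μ)
    (hdual : ∀ φ : X → ℝ, Continuous φ → Integrable φ μ →
      Integrable (fun x => ruelle ν v B φ x) μ → ∫ x, ruelle ν v B φ x ∂μ = ∫ x, φ x ∂μ) :
    0 ≤ ∫ x, B x ∂μ := by
  simpa [ruelle_zero_apply] using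
    neg_integral_le_integral_log_ruelle_zero_div_of_le hv hB hBM hBnorm hint hdual
      (u := fun _ => 1) continuous_const one_pos (fun _ => le_rfl) (fun _ => le_rfl)

lemma neg_integral_le_integral_log_ruelle_zero_div (hv : Continuous v) (hB : Continuous B)
    {M : ℝ} (hBM : ∀ y, B y ≤ M) (hBnorm : ∀ x, ruelle ν v B (fun _ => 1) x = 1)
    (hint : Integrable B μ)
    (hdual : ∀ φ : X → ℝ, Continuous φ → Integrable φ μ →
      Integrable (fun x => ruelle ν v B φ x) μ → ∫ x, ruelle ν v B φ x ∂μ = ∫ x, φ x ∂μ)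
    {u : X → ℝ} (hu : Continuous u) {C : ℝ} (huC : ∀ y, |u y| ≤ C) (hu_pos : ∀ y, 0 < u y) :
    -∫ x, B x ∂μ ≤ ∫ x, log (ruelle ν v (fun _ => 0) u x / u x) ∂μ := by
  set a := ruelle ν v (fun _ => 0) u
  have ha_pos : ∀ x, 0 < a x := ruelle_zero_pos hu huC hu_pos
  have ha : Continuous a := continuous_ruelle hv continuous_const hu (by simpa using huC)
  have hshift : ∀ ε > 0, -∫ x, B x ∂μ ≤ ∫ x, log ((a x + ε) / (u x + ε)) ∂μ := by
    intro ε hε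
    have ha_add : ∀ x, ruelle ν v (fun _ => 0) (fun y => u y + ε) x = a x + ε := fun x => by
      have hu_int : Integrable (fun z => u (z + v x)) ν :=
        (hu.comp (continuous_add_const (v x))).integrable_of_abs_le fun z => huC _
      simp only [a, ruelle_zero_apply]
      rw [integral_add hu_int (integrable_const ε)]
      simp
    simpa only [ha_add] using neg_integral_le_integral_log_ruelle_zero_div_of_le hv hB hBM hBnorm
      hint hdual (u := fun y => u y + ε) (C := C + ε) (hu.add continuous_const) hε
      (fun y => le_add_of_nonneg_left (hu_pos y).le)
      (fun y => by linarith [le_abs_self (u y), huC y])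
  -- without integrability the integral is the junk value `0`
  by_cases hf : Integrable (fun x => log (a x / u x)) μ
  · have hlim : Tendsto (fun ε => ∫ x, log ((a x + ε) / (u x + ε)) ∂μ) (𝓝[>] 0)
        (𝓝 (∫ x, log (a x / u x) ∂μ)) := by
      refine tendsto_integral_filter_of_dominated_convergence (fun x => |log (a x / u x)|)
        (Eventually.of_forall fun ε =>
          ((ha.measurable.add_const ε).div (hu.measurable.add_const ε)).log.aestronglyMeasurable)
        (eventually_mem_nhdsWithin.mono fun ε hε =>
          ae_of_all _ fun x => abs_log_add_div_add_le (ha_pos x) (hu_pos x) (le_of_lt hε))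
        hf.abs (ae_of_all _ fun x => ?_)
      have hcont : ContinuousAt (fun ε => log ((a x + ε) / (u x + ε))) 0 :=
        ((continuousAt_const.add continuousAt_id).div (continuousAt_const.add continuousAt_id)
          (by simpa using (hu_pos x).ne')).log (by simpa using (div_pos (ha_pos x) (hu_pos x)).ne')
      simpa using hcont.tendsto.mono_left nhdsWithin_le_nhds
    exact ge_of_tendsto hlim (eventually_mem_nhdsWithin.mono hshift)
  · rw [integral_undef hf, neg_nonpos]
    exact integral_nonneg_of_ruelle_dual hv hB hBM hBnorm hint hdual

end Ruelle

theorem stmt3_general {X : Type*} [NormedAddCommGroup X] [NormedSpace ℝ X] [CompleteSpace X]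
    [MeasurableSpace X] [BorelSpace X]
    (T : X →L[ℝ] X) (hTsurj : Function.Surjective T)
    (E : ℕ → Submodule ℝ X)
    (hEclosed : ∀ n, 1 ≤ n → IsClosed ((E n : Set X)))
    (hEcompl : ∀ n, 1 ≤ n → IsCompl (LinearMap.ker ((T ^ n : X →L[ℝ] X) : X →ₗ[ℝ] X)) (E n))
    (ν : Measure X) [IsProbabilityMeasure ν]
    (v : X → X) (hv : ∀ x, v x ∈ E 1 ∧ T (v x) = x)
    (B : X → ℝ) (hBcont : Continuous B) (hBbdd : ∃ M : ℝ, ∀ x, B x ≤ M)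
    (hBnorm : ∀ x, ruelle ν v B (fun _ => (1 : ℝ)) x = 1)
    (μ : Measure X) [IsProbabilityMeasure μ]
    (hint : Integrable B μ)
    (hdual : ∀ φ : X → ℝ, Continuous φ → Integrable φ μ →
      Integrable (fun x => ruelle ν v B φ x) μ →
      ∫ x, ruelle ν v B φ x ∂μ = ∫ x, φ x ∂μ) :
    entropy ν v μ = -∫ x, B x ∂μ := by
  obtain ⟨M, hM⟩ := hBbdd
  have hv_cont : Continuous v :=
    continuous_of_isCompl_ker hTsurj (hEclosed 1 le_rfl)
      (by simpa only [pow_one] using hEcompl 1 le_rfl) hv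
  have hruelle_expB : ∀ x, ruelle ν v (fun _ => 0) (fun y => exp (B y)) x = 1 := fun x => by
    simpa [ruelle] using hBnorm x
  refine IsLeast.csInf_eq ⟨⟨fun x => exp (B x), continuous_exp.comp hBcont,
    ⟨exp M, fun x => by rw [abs_exp]; exact exp_le_exp.mpr (hM x)⟩, fun x => exp_pos _, ?_⟩, ?_⟩
  · simp only [hruelle_expB, one_div, log_inv, log_exp, integral_neg]
  · rintro r ⟨u, hu, ⟨C, huC⟩, hu_pos, rfl⟩
    exact neg_integral_le_integral_log_ruelle_zero_div hv_cont hBcont hM hBnorm hint hdual hu huC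
      hu_pos

/-- If `B` is continuous, bounded above, normalized (`𝓛_B 1 = 1`), and
`μ` is a `T`-invariant Borel probability measure with `B` `μ`-integrable satisfying the
duality `∫ 𝓛_B φ dμ = ∫ φ dμ` for every continuous `φ` for which both sides are defined
(in particular `𝓛_B^* μ = μ`), then `h_ν(μ) = -∫ B dμ`. -/
theorem stmt3 {X : Type*} [NormedAddCommGroup X] [NormedSpace ℝ X] [CompleteSpace X]
    [MeasurableSpace X] [BorelSpace X]
    (T : X →L[ℝ] X) (hTsurj : Function.Surjective T) (hTinj : ¬ Function.Injective T)
    (hfd : FiniteDimensional ℝ (LinearMap.ker (T : X →ₗ[ℝ] X))) (hpos : 0 < Module.finrank ℝ (LinearMap.ker (T : X →ₗ[ℝ] X)))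
    (E : ℕ → Submodule ℝ X)
    (hEclosed : ∀ n, 1 ≤ n → IsClosed ((E n : Set X)))
    (hEcompl : ∀ n, 1 ≤ n → IsCompl (LinearMap.ker ((T ^ n : X →L[ℝ] X) : X →ₗ[ℝ] X)) (E n))
    (hEmap : ∀ n, 1 ≤ n → ∀ u ∈ E (n + 1), T u ∈ E n)
    (ν : Measure X) [IsProbabilityMeasure ν] (hνsupp : ν ((LinearMap.ker (T : X →ₗ[ℝ] X) : Set X)ᶜ) = 0)
    (v : X → X) (hv : ∀ x, v x ∈ E 1 ∧ T (v x) = x)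
    (B : X → ℝ) (hBcont : Continuous B) (hBbdd : ∃ M : ℝ, ∀ x, B x ≤ M)
    (hBnorm : ∀ x, ruelle ν v B (fun _ => (1 : ℝ)) x = 1)
    (μ : Measure X) [IsProbabilityMeasure μ] (hinv : Measure.map T μ = μ)
    (hint : Integrable B μ)
    (hdual : ∀ φ : X → ℝ, Continuous φ → Integrable φ μ →
      Integrable (fun x => ruelle ν v B φ x) μ →
      ∫ x, ruelle ν v B φ x ∂μ = ∫ x, φ x ∂μ) :
    entropy ν v μ = -∫ x, B x ∂μ :=
  stmt3_general T hTsurj E hEclosed hEcompl ν v hv B hBcont hBbdd hBnorm μ hint hdual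
end

section
/- Let n ≥ 1, y¹, y² ∈ X and x¹ ∈ X with T^n(x¹) = y¹. Then there exists x² ∈ X with T^n(x²) = y², x¹ − x² ∈ E_n, and ‖T^j(x¹) − T^j(x²)‖ ≤ p(T^{n−j})^{−1} ‖y¹ − y²‖ for every 0 ≤ j ≤ n−1. Consequently, for every α-Hölder A : X → ℝ, |S_n A(x¹) − S_n A(x²)| ≤ Hol_A · ( Σ_{j=1}^{n} p(T^j)^{−α} ) · ‖y¹ − y²‖^α. -/
open MeasureTheory Real Filter

/-!
Choose `e ∈ E_n` with `T^n e = y¹ - y²`, which is possible because `T^n` is onto and `E_n`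
complements its kernel, and put `x² = x¹ - e`. Since `T` maps `E_{k+1}` into `E_k`, the iterate
`T^j e` lies in `E_{n-j}`, and `T^{n-j}` sends it to `y¹ - y²`; the definition of `p(T^{n-j})`
therefore bounds `‖T^j e‖` by `p(T^{n-j})⁻¹ ‖y¹ - y²‖`. The Hölder estimate follows term by term.
-/

/-- `p(T^n) := inf { ‖T^n x‖ : x ∈ E_n, ‖x‖ = 1 }` for `n ≥ 1`, and `p(T^0) := 1`. -/
noncomputable def pT {X : Type*} [NormedAddCommGroup X] [NormedSpace ℝ X]
    (T : X →L[ℝ] X) (E : ℕ → Submodule ℝ X) (n : ℕ) : ℝ :=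
  if n = 0 then 1 else sInf { r : ℝ | ∃ x ∈ E n, ‖x‖ = 1 ∧ r = ‖(T ^ n) x‖ }

lemma LinearMap.exists_mem_apply_eq_of_codisjoint_ker {R M N : Type*} [Ring R]
    [AddCommGroup M] [AddCommGroup N] [Module R M] [Module R N] {f : M →ₗ[R] N}
    (hf : Function.Surjective f) {F : Submodule R M} (hF : Codisjoint (LinearMap.ker f) F)
    (y : N) : ∃ e ∈ F, f e = y := by
  obtain ⟨v, rfl⟩ := hf y
  obtain ⟨k, e, hk, he, rfl⟩ := Submodule.codisjoint_iff_exists_add_eq.mp hF v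
  exact ⟨e, he, by rw [map_add, LinearMap.mem_ker.mp hk, zero_add]⟩

lemma abs_sum_sub_sum_le_of_holder {X ι : Type*} [SeminormedAddCommGroup X] (s : Finset ι)
    {A : X → ℝ} {CA α : ℝ} (hA : ∀ a b, |A a - A b| ≤ CA * ‖a - b‖ ^ α) (hCA : 0 ≤ CA)
    (hα : 0 ≤ α) {u v : ι → X} {c : ι → ℝ} {d : ℝ} (hc : ∀ i ∈ s, 0 ≤ c i) (hd : 0 ≤ d)
    (huv : ∀ i ∈ s, ‖u i - v i‖ ≤ c i * d) :
    |∑ i ∈ s, A (u i) - ∑ i ∈ s, A (v i)| ≤ CA * (∑ i ∈ s, c i ^ α) * d ^ α := by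
  calc |∑ i ∈ s, A (u i) - ∑ i ∈ s, A (v i)|
      ≤ ∑ i ∈ s, |A (u i) - A (v i)| := by
        rw [← Finset.sum_sub_distrib]; exact Finset.abs_sum_le_sum_abs _ _
    _ ≤ ∑ i ∈ s, CA * (c i ^ α * d ^ α) := Finset.sum_le_sum fun i hi => by
        rw [← Real.mul_rpow (hc i hi) hd]
        exact (hA _ _).trans <| by gcongr; exact huv i hi
    _ = CA * (∑ i ∈ s, c i ^ α) * d ^ α := by
        rw [← Finset.mul_sum, ← Finset.sum_mul, mul_assoc]

lemma holder_const_nonneg {X : Type*} [NormedAddCommGroup X] [Nontrivial X] {A : X → ℝ}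
    {CA α : ℝ} (hA : ∀ a b, |A a - A b| ≤ CA * ‖a - b‖ ^ α) : 0 ≤ CA := by
  obtain ⟨a, b, hab⟩ := exists_pair_ne X
  have hpos : 0 < ‖a - b‖ ^ α := Real.rpow_pos_of_pos (norm_pos_iff.mpr (sub_ne_zero.mpr hab)) α
  exact nonneg_of_mul_nonneg_left ((abs_nonneg _).trans (hA a b)) hpos

lemma Finset.sum_range_sub_eq_sum_range_succ {M : Type*} [AddCommMonoid M] (f : ℕ → M) (n : ℕ) :
    ∑ j ∈ Finset.range n, f (n - j) = ∑ j ∈ Finset.range n, f (j + 1) := by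
  rw [← Finset.sum_range_reflect (fun j => f (j + 1)) n]
  refine Finset.sum_congr rfl fun j hj => ?_
  rw [show n - 1 - j + 1 = n - j by grind]

section

variable {X : Type*} [NormedAddCommGroup X] [NormedSpace ℝ X] (T : X →L[ℝ] X)
  (E : ℕ → Submodule ℝ X)

lemma pT_mul_norm_le {m : ℕ} (hm : m ≠ 0) {u : X} (hu : u ∈ E m) :
    pT T E m * ‖u‖ ≤ ‖(T ^ m) u‖ := by
  rcases eq_or_ne u 0 with rfl | hu0
  · simp
  have hu' : 0 < ‖u‖ := norm_pos_iff.mpr hu0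
  have hunit : ‖‖u‖⁻¹ • u‖ = 1 := by
    rw [norm_smul, norm_inv, norm_norm, inv_mul_cancel₀ hu'.ne']
  have hle : pT T E m ≤ ‖(T ^ m) (‖u‖⁻¹ • u)‖ := by
    rw [pT, if_neg hm]
    exact csInf_le ⟨0, fun r ⟨x, _, _, hr⟩ => hr ▸ norm_nonneg _⟩
      ⟨_, (E m).smul_mem _ hu, hunit, rfl⟩
  rw [map_smul, norm_smul, norm_inv, norm_norm, le_inv_mul_iff₀ hu'] at hle
  linarith

variable {T E}

lemma norm_le_inv_pT_mul {m : ℕ} (hm : m ≠ 0) (hp : 0 < pT T E m) {u : X} (hu : u ∈ E m) :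
    ‖u‖ ≤ (pT T E m)⁻¹ * ‖(T ^ m) u‖ :=
  (le_inv_mul_iff₀ hp).mpr (pT_mul_norm_le T E hm hu)

lemma pow_apply_mem_of_mem_add (hEmap : ∀ n, 1 ≤ n → ∀ u ∈ E (n + 1), T u ∈ E n) (j : ℕ) :
    ∀ {m : ℕ}, 1 ≤ m → ∀ {u : X}, u ∈ E (m + j) → (T ^ j) u ∈ E m := by
  induction j with
  | zero => intro m _ u hu; simpa using hu
  | succ j ih =>
    intro m hm u hu
    rw [pow_succ', mul_apply_eq_comp]
    exact hEmap m hm _ (ih (by omega) (by rwa [add_right_comm, add_assoc]))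

lemma norm_pow_apply_le_inv_pT_mul (hEmap : ∀ n, 1 ≤ n → ∀ u ∈ E (n + 1), T u ∈ E n)
    {n j : ℕ} (hj : j < n) (hp : 0 < pT T E (n - j)) {e : X} (he : e ∈ E n) :
    ‖(T ^ j) e‖ ≤ (pT T E (n - j))⁻¹ * ‖(T ^ n) e‖ := by
  have hmem : (T ^ j) e ∈ E (n - j) :=
    pow_apply_mem_of_mem_add hEmap j (by omega) (by rwa [Nat.sub_add_cancel hj.le])
  have hcomp : (T ^ (n - j)) ((T ^ j) e) = (T ^ n) e := by
    rw [← mul_apply_eq_comp, ← pow_add, Nat.sub_add_cancel hj.le]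
  rw [← hcomp]
  exact norm_le_inv_pT_mul (by omega) hp hmem

end

theorem stmt13_general {X : Type*} [NormedAddCommGroup X] [NormedSpace ℝ X]
    (T : X →L[ℝ] X) (hTsurj : Function.Surjective T) (hTinj : ¬ Function.Injective T)
    (E : ℕ → Submodule ℝ X)
    (hEcompl : ∀ n, 1 ≤ n → IsCompl (LinearMap.ker ((T ^ n : X →L[ℝ] X) : X →ₗ[ℝ] X)) (E n))
    (hEmap : ∀ n, 1 ≤ n → ∀ u ∈ E (n + 1), T u ∈ E n)
    (hppos : ∀ n, 1 ≤ n → 0 < pT T E n)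
    (n : ℕ) (hn : 1 ≤ n) (y₁ y₂ x₁ : X) (hx₁ : (T ^ n) x₁ = y₁) :
    ∃ x₂ : X, (T ^ n) x₂ = y₂ ∧ x₁ - x₂ ∈ E n ∧
      (∀ j < n, ‖(T ^ j) x₁ - (T ^ j) x₂‖ ≤ (pT T E (n - j))⁻¹ * ‖y₁ - y₂‖) ∧
      ∀ (α : ℝ), 0 < α → α ≤ 1 → ∀ (A : X → ℝ) (CA : ℝ),
        (∀ a b, |A a - A b| ≤ CA * ‖a - b‖ ^ α) →
        |∑ j ∈ Finset.range n, A ((T ^ j) x₁) - ∑ j ∈ Finset.range n, A ((T ^ j) x₂)| ≤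
          CA * (∑ j ∈ Finset.range n, pT T E (j + 1) ^ (-α)) * ‖y₁ - y₂‖ ^ α := by
  have hsurj : Function.Surjective ((T ^ n : X →L[ℝ] X) : X →ₗ[ℝ] X) := by
    simpa only [ContinuousLinearMap.coe_coe, FunLike.coe_pow_eq_iterate] using hTsurj.iterate n
  obtain ⟨e, he, hTe : (T ^ n) e = y₁ - y₂⟩ :=
    LinearMap.exists_mem_apply_eq_of_codisjoint_ker hsurj (hEcompl n hn).codisjoint (y₁ - y₂)
  have hiter : ∀ j < n, ‖(T ^ j) x₁ - (T ^ j) (x₁ - e)‖ ≤ (pT T E (n - j))⁻¹ * ‖y₁ - y₂‖ := by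
    intro j hj
    rw [map_sub, sub_sub_cancel, ← hTe]
    exact norm_pow_apply_le_inv_pT_mul hEmap hj (hppos _ (by omega)) he
  refine ⟨x₁ - e, by rw [map_sub, hx₁, hTe, sub_sub_cancel], by simpa using he, hiter, ?_⟩
  intro α hα _ A CA hA
  obtain ⟨a, b, -, hab⟩ := Function.not_injective_iff.mp hTinj
  have : Nontrivial X := nontrivial_of_ne a b hab
  have hp : ∀ j ∈ Finset.range n, 0 < pT T E (n - j) := fun j hj => hppos _ (by grind)
  calc _ ≤ CA * (∑ j ∈ Finset.range n, (pT T E (n - j))⁻¹ ^ α) * ‖y₁ - y₂‖ ^ α :=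
        abs_sum_sub_sum_le_of_holder _ hA (holder_const_nonneg hA) hα.le
          (fun j hj => inv_nonneg.mpr (hp j hj).le) (norm_nonneg _)
          fun j hj => hiter j (Finset.mem_range.mp hj)
    _ = _ := by
        rw [← Finset.sum_range_sub_eq_sum_range_succ (fun m => pT T E m ^ (-α))]
        congr 2
        exact Finset.sum_congr rfl fun j hj => by
          rw [Real.inv_rpow (hp j hj).le, Real.rpow_neg (hp j hj).le]

/-- Given `n ≥ 1`, points `y¹, y²` and `x¹` with `T^n x¹ = y¹`, there
is `x²` with `T^n x² = y²`, `x¹ - x² ∈ E_n`, and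
`‖T^j x¹ - T^j x²‖ ≤ p(T^{n-j})⁻¹ ‖y¹ - y²‖` for all `0 ≤ j ≤ n-1`; consequently for any
α-Hölder `A` (with constant `CA`),
`|S_n A x¹ - S_n A x²| ≤ CA ⬝ (Σ_{j=1}^n p(T^j)^{-α}) ⬝ ‖y¹ - y²‖^α`. -/
theorem stmt13 {X : Type*} [NormedAddCommGroup X] [NormedSpace ℝ X] [CompleteSpace X]
    (T : X →L[ℝ] X) (hTsurj : Function.Surjective T) (hTinj : ¬ Function.Injective T)
    (hfd : FiniteDimensional ℝ (LinearMap.ker (T : X →ₗ[ℝ] X))) (hpos : 0 < Module.finrank ℝ (LinearMap.ker (T : X →ₗ[ℝ] X)))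
    (E : ℕ → Submodule ℝ X)
    (hEclosed : ∀ n, 1 ≤ n → IsClosed ((E n : Set X)))
    (hEcompl : ∀ n, 1 ≤ n → IsCompl (LinearMap.ker ((T ^ n : X →L[ℝ] X) : X →ₗ[ℝ] X)) (E n))
    (hEmap : ∀ n, 1 ≤ n → ∀ u ∈ E (n + 1), T u ∈ E n)
    (hppos : ∀ n, 1 ≤ n → 0 < pT T E n)
    (n : ℕ) (hn : 1 ≤ n) (y₁ y₂ x₁ : X) (hx₁ : (T ^ n) x₁ = y₁) :
    ∃ x₂ : X, (T ^ n) x₂ = y₂ ∧ x₁ - x₂ ∈ E n ∧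
      (∀ j < n, ‖(T ^ j) x₁ - (T ^ j) x₂‖ ≤ (pT T E (n - j))⁻¹ * ‖y₁ - y₂‖) ∧
      ∀ (α : ℝ), 0 < α → α ≤ 1 → ∀ (A : X → ℝ) (CA : ℝ),
        (∀ a b, |A a - A b| ≤ CA * ‖a - b‖ ^ α) →
        |∑ j ∈ Finset.range n, A ((T ^ j) x₁) - ∑ j ∈ Finset.range n, A ((T ^ j) x₂)| ≤
          CA * (∑ j ∈ Finset.range n, pT T E (j + 1) ^ (-α)) * ‖y₁ - y₂‖ ^ α :=
  stmt13_general T hTsurj hTinj E hEcompl hEmap hppos n hn y₁ y₂ x₁ hx₁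
end

section
/- Let X be a real Banach space, T : X → X a bounded linear operator, A : X → ℝ continuous with m(A) finite, and V : X → ℝ a continuous sub-action for A, i.e. V(T(x)) ≥ V(x) + A(x) − m(A) for all x ∈ X. Let μ be a T-invariant Borel probability measure with ∫ A dμ = m(A) (a maximizing measure) such that A and V are μ-integrable. Then the support of μ is contained in the contact set Ω(A) := { x ∈ X : V(T(x)) − V(x) − A(x) + m(A) = 0 }. -/
open MeasureTheory Real Filter

/-- The set of values `∫ A dμ` over `T`-invariant Borel probability measures `μ` for
which the integral is well-defined. -/
def mSet {X : Type*} [NormedAddCommGroup X] [NormedSpace ℝ X] [MeasurableSpace X]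
    (T : X →L[ℝ] X) (A : X → ℝ) : Set ℝ :=
  { r : ℝ | ∃ μ : MeasureTheory.Measure X, MeasureTheory.IsProbabilityMeasure μ ∧
      MeasureTheory.Measure.map T μ = μ ∧ MeasureTheory.Integrable A μ ∧
      r = ∫ x, A x ∂μ }

/-- `m(A) := sup { ∫ A dμ : μ a T-invariant Borel probability measure }`. -/
noncomputable def mval {X : Type*} [NormedAddCommGroup X] [NormedSpace ℝ X]
    [MeasurableSpace X] (T : X →L[ℝ] X) (A : X → ℝ) : ℝ :=
  sSup (mSet T A)

/-- If `V` is a continuous sub-action for a continuous potential `A`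
with `m(A)` finite, and `μ` is a maximizing measure for `A` (with `A` and `V`
`μ`-integrable), then the support of `μ` is contained in the contact set
`Ω(A) = { x : V(T x) - V x - A x + m(A) = 0 }`. -/
theorem stmt14 {X : Type*} [NormedAddCommGroup X] [NormedSpace ℝ X] [CompleteSpace X]
    [MeasurableSpace X] [BorelSpace X]
    (T : X →L[ℝ] X)
    (A : X → ℝ) (hAcont : Continuous A)
    (hfin : (mSet T A).Nonempty ∧ BddAbove (mSet T A))
    (V : X → ℝ) (hVcont : Continuous V)
    (hVsub : ∀ x : X, V x + A x - mval T A ≤ V (T x))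
    (μ : Measure X) [IsProbabilityMeasure μ] (hinv : Measure.map T μ = μ)
    (hAint : Integrable A μ) (hVint : Integrable V μ)
    (hmax : ∫ x, A x ∂μ = mval T A) :
    {x : X | ∀ U : Set X, IsOpen U → x ∈ U → 0 < μ U} ⊆
      {x : X | V (T x) - V x - A x + mval T A = 0} := by

  set g : X → ℝ := fun x => V (T x) - V x - A x + mval T A with hg
  have hgcont : Continuous g := by
    fun_prop
  have hVmap : Integrable V (Measure.map T μ) := by rw [hinv]; exact hVint
  have hVT : Integrable (fun x => V (T x)) μ :=
    (integrable_map_measure hVcont.aestronglyMeasurable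
      T.continuous.measurable.aemeasurable).mp hVmap
  have hgint : Integrable g μ := ((hVT.sub hVint).sub hAint).add (integrable_const (mval T A))
  have hVTint : ∫ x, V (T x) ∂μ = ∫ x, V x ∂μ := by
    conv_rhs => rw [← hinv]
    exact (integral_map T.continuous.measurable.aemeasurable hVcont.aestronglyMeasurable).symm
  have i1 : Integrable (fun x => V (T x) - V x) μ := hVT.sub hVint
  have i2 : Integrable (fun x => V (T x) - V x - A x) μ := i1.sub hAint
  have hgzero : ∫ x, g x ∂μ = 0 := by
    show ∫ x, (V (T x) - V x - A x + mval T A) ∂μ = 0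
    rw [integral_add i2 (integrable_const (mval T A)), integral_sub i1 hAint,
      integral_sub hVT hVint, hVTint, hmax, integral_const]
    simp
  have hgnn : ∀ x, 0 ≤ g x := fun x => by
    have := hVsub x
    show 0 ≤ V (T x) - V x - A x + mval T A
    linarith
  have hae : g =ᵐ[μ] 0 :=
    (integral_eq_zero_iff_of_nonneg hgnn hgint).mp hgzero
  intro x hx
  by_contra hgx
  have hgxpos : 0 < g x := lt_of_le_of_ne (hgnn x) (Ne.symm hgx)
  set U : Set X := g ⁻¹' Set.Ioi (g x / 2) with hU
  have hUopen : IsOpen U := isOpen_Ioi.preimage hgcont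
  have hxU : x ∈ U := by
    show g x ∈ Set.Ioi (g x / 2)
    exact Set.mem_Ioi.mpr (half_lt_self hgxpos)
  have hpos : 0 < μ U := hx U hUopen hxU
  have hU0 : μ U = 0 := by
    refine measure_mono_null ?_ hae
    intro y hy
    have hy' : g x / 2 < g y := hy
    have : g y ≠ 0 := by
      intro h; rw [h] at hy'; exact absurd hy' (not_lt.mpr (half_pos hgxpos).le)
    exact this
  exact absurd hU0 hpos.ne'
end

section
/- Let L : ℓ¹(ℝ) → ℓ¹(ℝ) be the weighted shift L((x_n)_{n≥1}) := (2 x_{n+1})_{n≥1}, let v := (2^{−n+1})_{n≥1} ∈ ℓ¹(ℝ), and define A(x) := −‖x − v‖₁ and V := A. Then: (i) L(v) = v; (ii) for every x ∈ ℓ¹(ℝ), ‖L(x) − v‖₁ ≤ 2‖x − v‖₁, i.e. V(L(x)) ≥ V(x) + A(x), so V is a sub-action for A (with m(A) = 0); (iii) for every y ∈ ℓ¹(ℝ), the point x̃ := (1, y₁/2, y₂/2, y₃/2, …) belongs to ℓ¹(ℝ), satisfies L(x̃) = y and ‖y − v‖₁ = 2‖x̃ − v‖₁, i.e. V(y) =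 V(x̃) + A(x̃); hence V is a calibrated sub-action for A. -/
open MeasureTheory Real Filter ENNReal

private lemma norm_lp1 (f : lp (fun _ : ℕ => ℝ) 1) : ‖f‖ = ∑' n, ‖(f : ℕ → ℝ) n‖ := by
  have := lp.norm_eq_tsum_rpow (p := 1) (by norm_num) f
  simpa using this

private lemma summable_lp1 (f : lp (fun _ : ℕ => ℝ) 1) :
    Summable fun n => ‖(f : ℕ → ℝ) n‖ := by
  have := (lp.memℓp f).summable (p := 1) (by norm_num)
  simpa using this

/-- For the weighted shift `L((x_n)_n) = (2 x_{n+1})_n` on `ℓ¹(ℝ)`,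
the point `v = (2^{-n+1})_{n≥1}` is fixed by `L`, and with `A(x) = -‖x - v‖₁` and
`V = A`: (ii) `‖L x - v‖₁ ≤ 2 ‖x - v‖₁`, i.e. `V(L x) ≥ V x + A x`, so `V` is a
sub-action for `A` (with `m(A) = 0`); (iii) for every `y` the point
`x̃ = (1, y₁/2, y₂/2, …)` lies in `ℓ¹(ℝ)`, satisfies `L x̃ = y` and
`‖y - v‖₁ = 2 ‖x̃ - v‖₁`, i.e. `V y = V x̃ + A x̃`; hence `V` is a calibrated
sub-action for `A`. -/
theorem stmt18
    [MeasurableSpace (lp (fun _ : ℕ => ℝ) 1)] [BorelSpace (lp (fun _ : ℕ => ℝ) 1)]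
    (L : lp (fun _ : ℕ => ℝ) 1 →L[ℝ] lp (fun _ : ℕ => ℝ) 1)
    (hL : ∀ (x : lp (fun _ : ℕ => ℝ) 1) (n : ℕ), (L x : ℕ → ℝ) n = 2 * (x : ℕ → ℝ) (n + 1))
    (v : lp (fun _ : ℕ => ℝ) 1) (hv : ∀ n : ℕ, (v : ℕ → ℝ) n = (2 : ℝ)⁻¹ ^ n) :
    L v = v ∧
    mval L (fun x => -‖x - v‖) = 0 ∧
    (∀ x : lp (fun _ : ℕ => ℝ) 1, ‖L x - v‖ ≤ 2 * ‖x - v‖) ∧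
    (∀ x : lp (fun _ : ℕ => ℝ) 1, -‖x - v‖ + -‖x - v‖ ≤ -‖L x - v‖) ∧
    (∀ y : lp (fun _ : ℕ => ℝ) 1, ∃ xt : lp (fun _ : ℕ => ℝ) 1,
      (xt : ℕ → ℝ) 0 = 1 ∧ (∀ n : ℕ, (xt : ℕ → ℝ) (n + 1) = (y : ℕ → ℝ) n / 2) ∧
      L xt = y ∧ ‖y - v‖ = 2 * ‖xt - v‖ ∧ -‖y - v‖ = -‖xt - v‖ + -‖xt - v‖) := by
  have hLv : L v = v := by
    apply lp.ext
    funext n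
    rw [hL, hv, hv, pow_succ]
    ring
  have hbound : ∀ z : lp (fun _ : ℕ => ℝ) 1, ‖L z‖ ≤ 2 * ‖z‖ := by
    intro z
    rw [norm_lp1, norm_lp1]
    have h1 : ∀ n, ‖(L z : ℕ → ℝ) n‖ = 2 * ‖(z : ℕ → ℝ) (n + 1)‖ := by
      intro n; rw [hL, norm_mul]; norm_num
    calc ∑' n, ‖(L z : ℕ → ℝ) n‖ = ∑' n, 2 * ‖(z : ℕ → ℝ) (n + 1)‖ := tsum_congr h1
      _ = 2 * ∑' n, ‖(z : ℕ → ℝ) (n + 1)‖ := tsum_mul_left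
      _ ≤ 2 * ∑' n, ‖(z : ℕ → ℝ) n‖ := by
          refine mul_le_mul_of_nonneg_left ?_ (by norm_num)
          refine Summable.tsum_le_tsum_of_inj (fun n => n + 1) (fun a b h => by simpa using h)
            (fun c _ => norm_nonneg _) (fun a => le_rfl)
            ((summable_lp1 z).comp_injective (fun a b h => by simpa using h))
            (summable_lp1 z)
  have h3 : ∀ x : lp (fun _ : ℕ => ℝ) 1, ‖L x - v‖ ≤ 2 * ‖x - v‖ := by
    intro x
    have : L x - v = L (x - v) := by rw [map_sub, hLv]
    rw [this]; exact hbound _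
  have h4 : ∀ x : lp (fun _ : ℕ => ℝ) 1, -‖x - v‖ + -‖x - v‖ ≤ -‖L x - v‖ := by
    intro x; have := h3 x; linarith
  refine ⟨hLv, ?_, h3, h4, ?_⟩
  · have hAcont : Continuous (fun x : lp (fun _ : ℕ => ℝ) 1 => -‖x - v‖) :=
      ((continuous_id.sub continuous_const).norm).neg
    have h0mem : (0 : ℝ) ∈ mSet L (fun x => -‖x - v‖) := by
      refine ⟨Measure.dirac v, inferInstance, ?_, ?_, ?_⟩
      · rw [Measure.map_dirac' (L.continuous.measurable), hLv]
      · refine ⟨hAcont.aestronglyMeasurable, ?_⟩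
        simp [HasFiniteIntegral, lintegral_dirac]
      · rw [integral_dirac]
        simp
    have hub : ∀ r ∈ mSet L (fun x => -‖x - v‖), r ≤ 0 := by
      rintro r ⟨μ, hμ, _, hint, rfl⟩
      exact integral_nonpos fun x => neg_nonpos.2 (norm_nonneg _)
    exact le_antisymm (csSup_le ⟨0, h0mem⟩ hub) (le_csSup ⟨0, hub⟩ h0mem)
  · intro y
    set w : ℕ → ℝ := fun n => if n = 0 then 1 else (y : ℕ → ℝ) (n - 1) / 2 with hw
    have hw0 : w 0 = 1 := rfl
    have hwS : ∀ n, w (n + 1) = (y : ℕ → ℝ) n / 2 := fun n => rfl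
    have hwsum : Summable fun n => ‖w n‖ := by
      rw [← (summable_nat_add_iff 1)]
      have : (fun n => ‖w (n + 1)‖) = fun n => ‖(y : ℕ → ℝ) n‖ / 2 := by
        funext n; rw [hwS, norm_div]; norm_num
      rw [this]
      exact (summable_lp1 y).div_const 2
    have hwmem : Memℓp w 1 := memℓp_gen (by simpa using hwsum)
    set xt : lp (fun _ : ℕ => ℝ) 1 := ⟨w, hwmem⟩ with hxt
    have hLxt : L xt = y := by
      apply lp.ext; funext n
      rw [hL]
      show 2 * w (n + 1) = (y : ℕ → ℝ) n
      rw [hwS]; ring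
    have hc : ∀ n, ((xt - v : lp (fun _ : ℕ => ℝ) 1) : ℕ → ℝ) n = w n - (2:ℝ)⁻¹ ^ n := by
      intro n
      rw [lp.coeFn_sub, Pi.sub_apply, hv]
    have hc0 : ‖((xt - v : lp (fun _ : ℕ => ℝ) 1) : ℕ → ℝ) 0‖ = 0 := by
      rw [hc]; simp [hw0]
    have hcS : ∀ n, ‖((xt - v : lp (fun _ : ℕ => ℝ) 1) : ℕ → ℝ) (n + 1)‖
        = ‖((y - v : lp (fun _ : ℕ => ℝ) 1) : ℕ → ℝ) n‖ / 2 := by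
      intro n
      rw [hc, hwS, lp.coeFn_sub, Pi.sub_apply, hv, pow_succ]
      rw [show (y : ℕ → ℝ) n / 2 - (2:ℝ)⁻¹ ^ n * 2⁻¹ = ((y : ℕ → ℝ) n - (2:ℝ)⁻¹ ^ n) / 2 by ring]
      rw [norm_div]; norm_num
    have hhalf : ‖xt - v‖ = ‖y - v‖ / 2 := by
      rw [norm_lp1]
      rw [Summable.tsum_eq_zero_add (summable_lp1 (xt - v))]
      rw [hc0, zero_add]
      calc ∑' n, ‖((xt - v : lp (fun _ : ℕ => ℝ) 1) : ℕ → ℝ) (n+1)‖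
          = ∑' n, ‖((y - v : lp (fun _ : ℕ => ℝ) 1) : ℕ → ℝ) n‖ / 2 := tsum_congr hcS
        _ = (∑' n, ‖((y - v : lp (fun _ : ℕ => ℝ) 1) : ℕ → ℝ) n‖) / 2 := tsum_div_const
        _ = ‖y - v‖ / 2 := by rw [← norm_lp1]
    exact ⟨xt, hw0, hwS, hLxt, by rw [hhalf]; ring, by rw [hhalf]; ring⟩
end

section
/- Let L : ℓ¹(ℝ) → ℓ¹(ℝ) be the weighted shift L((x_n)_{n≥1}) := (2 x_{n+1})_{n≥1}, let v := (2^{−n+1})_{n≥1} ∈ ℓ¹(ℝ), and let A(x) := −‖x − v‖₁. Then: (i) the Dirac measure δ_v is an L-invariant Borel probability measure with ∫ A dδ_v = 0; (ii) every L-invariant Borel probability measure μ satisfies ∫ A dμ ≤ 0, hence m(A) = 0 and δ_v is a maximizing measure for A; (iii) if an L-invariant Borel probability measure μ satisfies ∫ A dμ = 0, then μ = δ_v. In particular δ_v is the unique maximizing measure for A. -/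
open MeasureTheory Real Filter ENNReal

/-- For the weighted shift `L((x_n)_n) = (2 x_{n+1})_n` on `ℓ¹(ℝ)`,
`v = (2^{-n+1})_{n≥1}` and `A(x) = -‖x - v‖₁`: (i) `δ_v` is an `L`-invariant Borel
probability measure with `∫ A dδ_v = 0`; (ii) every `L`-invariant Borel probability
measure `μ` satisfies `∫ A dμ ≤ 0`, hence `m(A) = 0` and `δ_v` is a maximizing measure
for `A`; (iii) any `L`-invariant Borel probability measure with `∫ A dμ = 0` equals
`δ_v`. In particular `δ_v` is the unique maximizing measure for `A`. -/
theorem stmt19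
    [MeasurableSpace (lp (fun _ : ℕ => ℝ) 1)] [BorelSpace (lp (fun _ : ℕ => ℝ) 1)]
    (L : lp (fun _ : ℕ => ℝ) 1 →L[ℝ] lp (fun _ : ℕ => ℝ) 1)
    (hL : ∀ (x : lp (fun _ : ℕ => ℝ) 1) (n : ℕ), (L x : ℕ → ℝ) n = 2 * (x : ℕ → ℝ) (n + 1))
    (v : lp (fun _ : ℕ => ℝ) 1) (hv : ∀ n : ℕ, (v : ℕ → ℝ) n = (2 : ℝ)⁻¹ ^ n) :
    IsProbabilityMeasure (Measure.dirac v) ∧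
    Measure.map L (Measure.dirac v) = Measure.dirac v ∧
    (∫ x, -‖x - v‖ ∂(Measure.dirac v)) = 0 ∧
    (∀ μ : Measure (lp (fun _ : ℕ => ℝ) 1), IsProbabilityMeasure μ →
      Measure.map L μ = μ → Integrable (fun x => -‖x - v‖) μ →
      ∫ x, -‖x - v‖ ∂μ ≤ 0) ∧
    mval L (fun x => -‖x - v‖) = 0 ∧
    (∫ x, -‖x - v‖ ∂(Measure.dirac v)) = mval L (fun x => -‖x - v‖) ∧
    (∀ μ : Measure (lp (fun _ : ℕ => ℝ) 1), IsProbabilityMeasure μ →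
      Measure.map L μ = μ → Integrable (fun x => -‖x - v‖) μ →
      ∫ x, -‖x - v‖ ∂μ = 0 → μ = Measure.dirac v) := by

  classical
  set A : lp (fun _ : ℕ => ℝ) 1 → ℝ := fun x => -‖x - v‖ with hAdef
  have hmeasL : Measurable L := L.continuous.measurable
  have hLv : L v = v := by
    apply lp.ext
    funext n
    rw [hL, hv, hv, pow_succ]
    ring
  have hmap : Measure.map L (Measure.dirac v) = Measure.dirac v := by
    rw [Measure.map_dirac' hmeasL, hLv]
  have hAcont : Continuous A := (continuous_norm.comp (continuous_id.sub continuous_const)).neg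
  have haev : ∀ᵐ x ∂(Measure.dirac v), x = v := by
    rw [ae_dirac_iff (by exact measurableSet_eq)]
  have hAae : A =ᵐ[Measure.dirac v] fun _ => (0 : ℝ) := by
    filter_upwards [haev] with x hx
    simp [A, hx]
  have hint_dirac : Integrable A (Measure.dirac v) :=
    (integrable_const (0 : ℝ)).congr hAae.symm
  have hI0 : (∫ x, A x ∂(Measure.dirac v)) = 0 := by
    rw [integral_congr_ae hAae, integral_const]
    simp
  have hprob : IsProbabilityMeasure (Measure.dirac (α := lp (fun _ : ℕ => ℝ) 1) v) :=
    inferInstance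
  have hle : ∀ μ : Measure (lp (fun _ : ℕ => ℝ) 1), IsProbabilityMeasure μ →
      Measure.map L μ = μ → Integrable A μ → ∫ x, A x ∂μ ≤ 0 := by
    intro μ _ _ _
    apply integral_nonpos
    intro x
    simp [A]
  have h0mem : (0 : ℝ) ∈ mSet L A :=
    ⟨Measure.dirac v, hprob, hmap, hint_dirac, hI0.symm⟩
  have hbdd : ∀ r ∈ mSet L A, r ≤ 0 := by
    rintro r ⟨μ, hμ1, hμ2, hμ3, rfl⟩
    exact hle μ hμ1 hμ2 hμ3
  have hmval : mval L A = 0 :=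
    le_antisymm (csSup_le ⟨0, h0mem⟩ hbdd) (le_csSup ⟨0, hbdd⟩ h0mem)
  have huniq : ∀ μ : Measure (lp (fun _ : ℕ => ℝ) 1), IsProbabilityMeasure μ →
      Measure.map L μ = μ → Integrable A μ → ∫ x, A x ∂μ = 0 → μ = Measure.dirac v := by
    intro μ hμp _ hint hI
    have hnorm_int : Integrable (fun x => ‖x - v‖) μ := by
      have h := hint.norm
      refine h.congr (Filter.Eventually.of_forall fun x => ?_)
      simp [A, abs_of_nonneg (norm_nonneg (x - v))]
    have hnormI : (∫ x, ‖x - v‖ ∂μ) = 0 := by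
      have : (∫ x, ‖x - v‖ ∂μ) = -∫ x, A x ∂μ := by
        rw [← integral_neg]
        congr 1
        funext x
        simp [A]
      rw [this, hI, neg_zero]
    have hae0 : (fun x => ‖x - v‖) =ᵐ[μ] 0 :=
      (integral_eq_zero_iff_of_nonneg (fun x => norm_nonneg _) hnorm_int).mp hnormI
    have haev' : ∀ᵐ x ∂μ, x = v := by
      filter_upwards [hae0] with x hx
      have : ‖x - v‖ = 0 := hx
      have := norm_eq_zero.mp this
      exact sub_eq_zero.mp this
    ext s hs
    by_cases hvs : v ∈ s
    · have h1 : μ s + μ sᶜ = 1 := by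
        rw [measure_add_measure_compl hs]; exact hμp.measure_univ
      have h2 : μ sᶜ = 0 := by
        apply measure_mono_null (s := sᶜ) (t := {x | x ≠ v})
        · intro x hx hxv
          exact hx (hxv ▸ hvs)
        · exact haev'
      rw [Measure.dirac_apply' _ hs, Set.indicator_of_mem hvs]
      rw [h2, add_zero] at h1
      simp [h1]
    · have : μ s = 0 := by
        apply measure_mono_null (t := {x | x ≠ v})
        · intro x hx hxv
          exact hvs (hxv ▸ hx)
        · exact haev'
      rw [this, Measure.dirac_apply' _ hs, Set.indicator_of_notMem hvs]
  exact ⟨hprob, hmap, hI0, hle, hmval, by rw [hI0, hmval], huniq⟩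
end
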